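/- Let G be a graph and S ⊆ V(G) such that G[S] is connected. For every vertex v ∈ S, there exists a sequence (v₁ = v, v₂, …, v_k) with all vᵢ ∈ S, N[{v₁,…,v_k}] = N[S], and such that (v₁,…,v_k) is a legal sequence of first k moves in a connected domination game on G (each vᵢ with i ≥ 2 is adjacent to some earlier vⱼ, and each vᵢ dominates some vertex not dominated by v₁,…,v_{i−1}). -/

import Mathlib

open Finset

namespace ConnDomGame

variable {V : Type*} [Fintype V] [DecidableEq V]

/-- The closed neighborhood of a finite set of vertices. -/
def nbhd (G : SimpleGraph V) [DecidableRel G.Adj] (D : Finset V) : Finset V :=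
  univ.filter fun u => u ∈ D ∨ ∃ v ∈ D, G.Adj u v

/-- The legal moves in the connected domination game on `G` with predominated set `S`,
from the position where the set of played vertices is `D`: a legal move must dominate
a not-yet-dominated vertex and (except for the first move) be adjacent to a played vertex. -/
def legalMoves (G : SimpleGraph V) [DecidableRel G.Adj] (S D : Finset V) : Finset V :=
  univ.filter fun v =>
    ¬ (nbhd G {v} ⊆ S ∪ nbhd G D) ∧ (D = ∅ ∨ ∃ u ∈ D, G.Adj v u)

/-- Optimal number of further moves in the connected domination game on `G` with
predominated set `S`, from the position with played set `D`; `turn = true` means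
Dominator (the minimizer) is to move.  The value is `⊤` if the player to move can
force the game to get stuck with an undominated vertex remaining.  The fuel
argument `n` is sufficient whenever `n + D.card ≥ Fintype.card V`. -/
noncomputable def val (G : SimpleGraph V) [DecidableRel G.Adj] (S : Finset V) :
    Bool → ℕ → Finset V → ℕ∞
  | _, 0, D => if univ ⊆ S ∪ nbhd G D then 0 else ⊤
  | turn, n + 1, D =>
    if h : (legalMoves G S D).Nonempty then
      if turn then
        1 + (legalMoves G S D).inf' h fun v => val G S false n (insert v D)
      else
        1 + (legalMoves G S D).sup' h fun v => val G S true n (insert v D)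
    else if univ ⊆ S ∪ nbhd G D then 0 else ⊤

/-- The Dominator-start game connected domination number of `G` with the vertices of `S`
predominated (`γ_cg(G|S)`; for `S = ∅` this is `γ_cg(G)`). -/
noncomputable def gammaCG (G : SimpleGraph V) [DecidableRel G.Adj] (S : Finset V) : ℕ∞ :=
  val G S true (Fintype.card V) ∅

/-- The Staller-start game connected domination number of `G` with `S` predominated. -/
noncomputable def gammaCG' (G : SimpleGraph V) [DecidableRel G.Adj] (S : Finset V) : ℕ∞ :=
  val G S false (Fintype.card V) ∅

/-- The connected domination number of `G` with the set `S` predominated: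
minimum size of a set `D` inducing a connected subgraph and dominating all
vertices outside `S`. -/
noncomputable def gammaC (G : SimpleGraph V) (S : Finset V) : ℕ :=
  sInf {k | ∃ D : Finset V, D.card = k ∧ (G.induce (D : Set V)).Connected ∧
    ∀ u, u ∈ S ∨ u ∈ D ∨ ∃ v ∈ D, G.Adj u v}

/-- `l` is a legal sequence of first moves of the connected domination game on `G`
with predominated set `S`. -/
def LegalSeq (G : SimpleGraph V) [DecidableRel G.Adj] (S : Finset V) (l : List V) : Prop :=
  ∀ i (h : i < l.length), l.get ⟨i, h⟩ ∈ legalMoves G S (l.take i).toFinset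

end ConnDomGame


section Aux
open ConnDomGame Finset
variable {V : Type*} [Fintype V] [DecidableEq V]

lemma mem_nbhd {G : SimpleGraph V} [DecidableRel G.Adj] {D : Finset V} {u : V} :
    u ∈ nbhd G D ↔ u ∈ D ∨ ∃ v ∈ D, G.Adj u v := by
  simp [nbhd]

lemma nbhd_mono {G : SimpleGraph V} [DecidableRel G.Adj] {D E : Finset V} (h : D ⊆ E) :
    nbhd G D ⊆ nbhd G E := by
  intro u hu
  rw [mem_nbhd] at hu ⊢
  rcases hu with h1 | ⟨x, hx, hadj⟩
  · exact Or.inl (h h1)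
  · exact Or.inr ⟨x, h hx, hadj⟩

lemma singleton_subset_nbhd {G : SimpleGraph V} [DecidableRel G.Adj] {D : Finset V} {u : V}
    (h : u ∈ D) : nbhd G {u} ⊆ nbhd G D :=
  nbhd_mono (by simpa using h)

lemma key_lemma (G : SimpleGraph V) [DecidableRel G.Adj] (S P : Finset V) :
    ∀ {a b : ((S : Set V) : Type _)} (_ : (G.induce (S : Set V)).Walk a b),
      nbhd G {(a : V)} ⊆ nbhd G P → ¬ nbhd G {(b : V)} ⊆ nbhd G P →
      ∃ u ∈ S, (∃ p ∈ P, G.Adj u p) ∧ ¬ nbhd G {u} ⊆ nbhd G P := by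
  intro a b w
  induction w with
  | nil => intro h1 h2; exact absurd h1 h2
  | @cons a c b hac w ih =>
    intro h1 h2
    by_cases hc : nbhd G {(c : V)} ⊆ nbhd G P
    · exact ih hc h2
    · have hadj : G.Adj (a : V) (c : V) := hac
      have hcmem : (c : V) ∈ nbhd G P := h1 (by
        rw [mem_nbhd]
        exact Or.inr ⟨a, Finset.mem_singleton_self (a : V), hadj.symm⟩)
      rw [mem_nbhd] at hcmem
      rcases hcmem with h3 | ⟨p, hp, hadj2⟩
      · exact absurd (singleton_subset_nbhd h3) hc
      · exact ⟨c, Finset.mem_coe.mp c.2, ⟨p, hp, hadj2⟩, hc⟩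

lemma extend_legal (G : SimpleGraph V) [DecidableRel G.Adj] (S : Finset V)
    (hconn : (G.induce (S : Set V)).Connected) (v : V) (hv : v ∈ S) :
    ∀ n : ℕ, ∀ l : List V, v ∈ l → LegalSeq G ∅ l → l.Nodup → (∀ u ∈ l, u ∈ S) →
      (nbhd G S \ nbhd G l.toFinset).card ≤ n →
      ∃ l' : List V, LegalSeq G ∅ (l ++ l') ∧ (l ++ l').Nodup ∧
        (∀ u ∈ l ++ l', u ∈ S) ∧ nbhd G (l ++ l').toFinset = nbhd G S := by
  intro n
  induction n with
  | zero =>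
    intro l hvl hleg hnd hsub hcard
    refine ⟨[], by simpa using hleg, by simpa using hnd, by simpa using hsub, ?_⟩
    have hsub2 : l.toFinset ⊆ S := fun u hu => hsub u (List.mem_toFinset.mp hu)
    have h0 : nbhd G S \ nbhd G l.toFinset = ∅ := Finset.card_eq_zero.mp (Nat.le_zero.mp hcard)
    have h1 : nbhd G S ⊆ nbhd G l.toFinset := by
      rwa [Finset.sdiff_eq_empty_iff_subset] at h0
    simpa using Finset.Subset.antisymm (nbhd_mono hsub2) h1
  | succ n ih =>
    intro l hvl hleg hnd hsub hcard
    have hsub2 : l.toFinset ⊆ S := fun u hu => hsub u (List.mem_toFinset.mp hu)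
    by_cases heq : nbhd G l.toFinset = nbhd G S
    · exact ⟨[], by simpa using hleg, by simpa using hnd, by simpa using hsub,
        by simpa using heq⟩
    · -- find an undominated vertex and a witness s ∈ S
      obtain ⟨w, hw1, hw2⟩ :=
        Finset.exists_of_ssubset (lt_of_le_of_ne (nbhd_mono hsub2) heq)
      have hws : ∃ s ∈ S, w ∈ nbhd G {s} := by
        rw [mem_nbhd] at hw1
        rcases hw1 with h | ⟨s, hs, hadj⟩
        · exact ⟨w, h, by rw [mem_nbhd]; exact Or.inl (Finset.mem_singleton_self w)⟩
        · exact ⟨s, hs, by rw [mem_nbhd]; exact Or.inr ⟨s, Finset.mem_singleton_self s, hadj⟩⟩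
      obtain ⟨s, hs, hws⟩ := hws
      have hns : ¬ nbhd G {s} ⊆ nbhd G l.toFinset := fun h => hw2 (h hws)
      have h1 : nbhd G {v} ⊆ nbhd G l.toFinset :=
        singleton_subset_nbhd (List.mem_toFinset.mpr hvl)
      obtain ⟨u, huS, ⟨p, hp, hadjup⟩, hun⟩ :=
        (hconn.preconnected ⟨v, Finset.mem_coe.mpr hv⟩ ⟨s, Finset.mem_coe.mpr hs⟩).elim
          fun walk => key_lemma G S l.toFinset walk h1 hns
      have hunl : u ∉ l := fun h => hun (singleton_subset_nbhd (List.mem_toFinset.mpr h))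
      -- the extended list l ++ [u]
      have hleg' : LegalSeq G ∅ (l ++ [u]) := by
        intro i hi
        have hi2 : i < l.length + 1 := by simpa using hi
        rcases Nat.lt_succ_iff_lt_or_eq.mp hi2 with hi' | rfl
        · have hget : (l ++ [u]).get ⟨i, hi⟩ = l.get ⟨i, hi'⟩ := List.getElem_append_left hi'
          have htake : (l ++ [u]).take i = l.take i :=
            List.take_append_of_le_length (Nat.le_of_lt hi')
          rw [hget, htake]
          exact hleg i hi'
        · have hget : (l ++ [u]).get ⟨l.length, hi⟩ = u := by
            simp
          have htake : (l ++ [u]).take l.length = l := List.take_left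
          rw [hget, htake]
          simp only [legalMoves, Finset.mem_filter, Finset.mem_univ, true_and,
            Finset.empty_union]
          exact ⟨hun, Or.inr ⟨p, hp, hadjup⟩⟩
      have hnd' : (l ++ [u]).Nodup := by
        rw [List.nodup_append]
        exact ⟨hnd, List.nodup_singleton u, fun a ha b hb => by
          simp only [List.mem_singleton] at hb; exact fun hab => hunl (hb ▸ hab ▸ ha)⟩
      have hsub' : ∀ x ∈ l ++ [u], x ∈ S := by
        intro x hx
        rcases List.mem_append.mp hx with h | h
        · exact hsub x h
        · simp only [List.mem_singleton] at h; exact h ▸ huS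
      have htf : (l ++ [u]).toFinset = l.toFinset ∪ {u} := by
        simp [List.toFinset_append]
      have hcard' : (nbhd G S \ nbhd G (l ++ [u]).toFinset).card ≤ n := by
        have hmono : nbhd G l.toFinset ⊆ nbhd G (l ++ [u]).toFinset := by
          rw [htf]; exact nbhd_mono Finset.subset_union_left
        have hssub : nbhd G S \ nbhd G (l ++ [u]).toFinset ⊂
            nbhd G S \ nbhd G l.toFinset := by
          obtain ⟨x, hx1, hx2⟩ := Finset.not_subset.mp hun
          refine (Finset.ssubset_iff_of_subset
            (Finset.sdiff_subset_sdiff (Finset.Subset.refl _) hmono)).mpr ⟨x, ?_, ?_⟩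
          · refine Finset.mem_sdiff.mpr ⟨?_, hx2⟩
            exact nbhd_mono (Finset.singleton_subset_iff.mpr huS) hx1
          · intro hmem
            exact (Finset.mem_sdiff.mp hmem).2 (nbhd_mono (by
              rw [htf]; exact Finset.singleton_subset_iff.mpr
                (Finset.mem_union_right _ (Finset.mem_singleton_self u))) hx1)
        exact Nat.lt_succ_iff.mp (lt_of_lt_of_le (Finset.card_lt_card hssub) hcard)
      obtain ⟨l'', hA, hB, hC, hD⟩ := ih (l ++ [u])
        (List.mem_append.mpr (Or.inl hvl)) hleg' hnd' hsub' hcard'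
      have hassoc : l ++ u :: l'' = (l ++ [u]) ++ l'' := by simp
      exact ⟨u :: l'', hassoc ▸ hA, hassoc ▸ hB, hassoc ▸ hC, hassoc ▸ hD⟩

end Aux

open ConnDomGame in
/-- If `G[S]` is connected then for every `v ∈ S` there is a legal sequence of first
moves of the connected domination game on `G` starting with `v`, consisting of distinct
vertices of `S`, whose closed neighborhood equals `N[S]`. -/
theorem exists_legal_sequence_of_connected {V : Type*} [Fintype V] [DecidableEq V]
    (G : SimpleGraph V) [DecidableRel G.Adj] (S : Finset V)
    (hconn : (G.induce (S : Set V)).Connected) (v : V) (hv : v ∈ S) :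
    ∃ l : List V, LegalSeq G ∅ (v :: l) ∧ (v :: l).Nodup ∧
      (∀ u ∈ v :: l, u ∈ S) ∧ nbhd G (v :: l).toFinset = nbhd G S := by
  have hleg1 : LegalSeq G ∅ [v] := by
    intro i hi
    have hi0 : i = 0 := Nat.lt_one_iff.mp (by simpa using hi)
    subst hi0
    show v ∈ legalMoves G ∅ (([v].take 0).toFinset)
    simp only [List.take_zero, List.toFinset_nil]
    simp only [legalMoves, Finset.mem_filter, Finset.mem_univ, true_and]
    refine ⟨fun h => ?_, Or.inl trivial⟩
    have hvmem : v ∈ nbhd G {v} := mem_nbhd.mpr (Or.inl (Finset.mem_singleton_self v))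
    have := h hvmem
    simp [nbhd] at this
  obtain ⟨l', hA, hB, hC, hD⟩ := extend_legal G S hconn v hv _ [v] (by simp) hleg1
    (by simp) (by simpa using hv) le_rfl
  exact ⟨l', by simpa using hA, by simpa using hB, by simpa using hC, by simpa using hD⟩
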